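/- Let D be an N×N symmetric hollow nonnegative matrix with criterion matrix F = −JDJ having eigenpairs {(λ_i, v_i)}. Define Δg_i = (1/2) Σ_{j: λ_j<0} λ_j v_{i,j}². Then the optimal stress L* = min over Euclidean distance matrices D' of ‖D − D'‖_F² satisfies L* ≤ Σ_{i,j} (Δg_i + Δg_j)² + Σ_{i: λ_i<0} λ_i². -/

import Mathlib

open Matrix

/-- The `N × N` all-ones matrix. -/
def onesM (N : ℕ) : Matrix (Fin N) (Fin N) ℝ := Matrix.of fun _ _ => 1

/-- The averaging matrix `P = (1/N) 1_N 1_Nᵀ`. -/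
noncomputable def avgM (N : ℕ) : Matrix (Fin N) (Fin N) ℝ := (N : ℝ)⁻¹ • onesM N

/-- The centering matrix `J = I_N − (1/N) 1_N 1_Nᵀ`. -/
noncomputable def centerM (N : ℕ) : Matrix (Fin N) (Fin N) ℝ := 1 - avgM N

/-- Squared Frobenius norm. -/
def frobSq {N : ℕ} (M : Matrix (Fin N) (Fin N) ℝ) : ℝ := ∑ i, ∑ j, (M i j) ^ 2

/-- `D'` is a Euclidean distance matrix (Gower criterion form): symmetric,
    hollow, entrywise nonnegative, with `−JD'J` positive semidefinite. -/
def IsEDM {N : ℕ} (D' : Matrix (Fin N) (Fin N) ℝ) : Prop :=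
  D'.IsSymm ∧ (∀ i, D' i i = 0) ∧ (∀ i j, 0 ≤ D' i j) ∧
    (-(centerM N * D' * centerM N)).PosSemidef

/-!
Let `F = -JDJ` and let `S = ∑_{λ_k < 0} λ_k v_k v_kᵀ` be its negative spectral part. Since `J𝟙 = 0`,
`F` annihilates `𝟙`, so every eigenvector with `λ_k ≠ 0` is orthogonal to `𝟙` and `S` has zero row and
column sums. The witness is `D' = D - ½ κ(S)` with `κ(S)_ij = S_ii + S_jj - 2 S_ij`. As `S` is negative
semidefinite, `κ(S) ≤ 0` entrywise, so `D'` is nonnegative (and clearly symmetric and hollow); as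
`J κ(S) J = -2S`, we get `-JD'J = F - S`, the nonnegative spectral part of `F`, which is positive
semidefinite. In `‖½ κ(S)‖² = ∑ (Δg_i + Δg_j - S_ij)²`, where `Δg_i = S_ii / 2`, the zero row sums of `S`
kill the cross term, leaving `∑ (Δg_i + Δg_j)² + ‖S‖² = ∑ (Δg_i + Δg_j)² + ∑_{λ_k < 0} λ_k²`.
-/

open Finset

namespace Matrix.IsHermitian

variable {n : Type*} [Fintype n] [DecidableEq n] {A : Matrix n n ℝ} (hA : A.IsHermitian)

lemma apply_eq_sum_eigenvalues_mul (i j : n) :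
    A i j = ∑ k, hA.eigenvalues k * hA.eigenvectorBasis k i * hA.eigenvectorBasis k j := by
  nth_rewrite 1 [hA.spectral_theorem]
  simp only [Unitary.conjStarAlgAut_apply, mul_apply, diagonal_apply, sum_mul, star_apply,
    hA.eigenvectorUnitary_apply, Function.comp_apply, RCLike.ofReal_real_eq_id, id_eq, star_trivial]
  rw [sum_comm]
  refine sum_congr rfl fun k _ => ?_
  rw [sum_eq_single k (fun b _ hb => by simp [Ne.symm hb]) (by simp), if_pos rfl]
  ring

lemma sum_eigenvectorBasis_mul_eigenvectorBasis (k l : n) :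
    ∑ i, hA.eigenvectorBasis k i * hA.eigenvectorBasis l i = if k = l then 1 else 0 := by
  rw [← orthonormal_iff_ite.mp hA.eigenvectorBasis.orthonormal k l]
  simp [PiLp.inner_apply, mul_comm]

lemma sum_eigenvectorBasis_eq_zero (hcol : ∀ j, ∑ i, A i j = 0) {k : n}
    (hk : hA.eigenvalues k ≠ 0) : ∑ i, hA.eigenvectorBasis k i = 0 := by
  have heig (i : n) : ∑ j, A i j * hA.eigenvectorBasis k j =
      hA.eigenvalues k * hA.eigenvectorBasis k i := by
    simpa [mulVec, dotProduct] using congrFun (hA.mulVec_eigenvectorBasis k) i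
  have : hA.eigenvalues k * ∑ i, hA.eigenvectorBasis k i = 0 := by
    rw [mul_sum, ← sum_congr rfl fun i _ => heig i, sum_comm]
    exact sum_eq_zero fun j _ => by rw [← sum_mul, hcol j, zero_mul]
  exact (mul_eq_zero.mp this).resolve_left hk

noncomputable def spectralPart (s : Finset n) : Matrix n n ℝ :=
  ∑ k ∈ s, hA.eigenvalues k •
    vecMulVec (hA.eigenvectorBasis k : n → ℝ) (hA.eigenvectorBasis k : n → ℝ)

lemma spectralPart_apply (s : Finset n) (i j : n) :
    hA.spectralPart s i j =
      ∑ k ∈ s, hA.eigenvalues k * hA.eigenvectorBasis k i * hA.eigenvectorBasis k j := by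
  simp [spectralPart, sum_apply, vecMulVec_apply, mul_assoc]

lemma spectralPart_add_spectralPart_compl (s : Finset n) :
    hA.spectralPart s + hA.spectralPart sᶜ = A := by
  ext i j
  rw [add_apply, spectralPart_apply, spectralPart_apply, sum_add_sum_compl,
    ← apply_eq_sum_eigenvalues_mul]

lemma spectralPart_isSymm (s : Finset n) : (hA.spectralPart s).IsSymm :=
  IsSymm.ext fun i j => by simp only [spectralPart_apply, mul_right_comm]

lemma spectralPart_apply_self (s : Finset n) (i : n) :
    hA.spectralPart s i i = ∑ k ∈ s, hA.eigenvalues k * hA.eigenvectorBasis k i ^ 2 := by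
  simp only [spectralPart_apply, mul_assoc, sq]

lemma posSemidef_spectralPart {s : Finset n} (hs : ∀ k ∈ s, 0 ≤ hA.eigenvalues k) :
    (hA.spectralPart s).PosSemidef :=
  posSemidef_sum s fun k hk => by
    simpa using (posSemidef_vecMulVec_self_star (hA.eigenvectorBasis k : n → ℝ)).smul (hs k hk)

lemma posSemidef_neg_spectralPart {s : Finset n} (hs : ∀ k ∈ s, hA.eigenvalues k ≤ 0) :
    (-hA.spectralPart s).PosSemidef := by
  rw [spectralPart, ← sum_neg_distrib]
  refine posSemidef_sum s fun k hk => ?_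
  rw [← neg_smul]
  simpa using (posSemidef_vecMulVec_self_star (hA.eigenvectorBasis k : n → ℝ)).smul
    (neg_nonneg.mpr (hs k hk))

lemma sum_spectralPart_apply_eq_zero (hcol : ∀ j, ∑ i, A i j = 0) {s : Finset n}
    (hs : ∀ k ∈ s, hA.eigenvalues k ≠ 0) (i : n) : ∑ j, hA.spectralPart s i j = 0 := by
  simp only [spectralPart_apply]
  rw [sum_comm]
  exact sum_eq_zero fun k hk => by
    rw [← mul_sum, hA.sum_eigenvectorBasis_eq_zero hcol (hs k hk), mul_zero]

lemma sum_sq_spectralPart_apply (s : Finset n) :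
    ∑ i, ∑ j, hA.spectralPart s i j ^ 2 = ∑ k ∈ s, hA.eigenvalues k ^ 2 := by
  have hsq (i j : n) : hA.spectralPart s i j ^ 2 = ∑ k ∈ s, ∑ l ∈ s,
      hA.eigenvalues k * hA.eigenvalues l *
        (hA.eigenvectorBasis k i * hA.eigenvectorBasis l i) *
        (hA.eigenvectorBasis k j * hA.eigenvectorBasis l j) := by
    rw [spectralPart_apply, sq, sum_mul_sum]
    exact sum_congr rfl fun k _ => sum_congr rfl fun l _ => by ring
  simp_rw [hsq]
  rw [sum_comm]
  simp_rw [sum_comm (s := univ) (t := s), ← sum_mul, ← mul_sum,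
    sum_eigenvectorBasis_mul_eigenvectorBasis]
  simp [sq]

end Matrix.IsHermitian

section Centering

variable {N : ℕ}

lemma mul_avgM_apply (M : Matrix (Fin N) (Fin N) ℝ) (i j : Fin N) :
    (M * avgM N) i j = (N : ℝ)⁻¹ * ∑ b, M i b := by
  simp [avgM, onesM, mul_apply, ← sum_mul, mul_comm]

lemma avgM_mul_apply (M : Matrix (Fin N) (Fin N) ℝ) (i j : Fin N) :
    (avgM N * M) i j = (N : ℝ)⁻¹ * ∑ b, M b j := by
  simp [avgM, onesM, mul_apply, mul_sum]

lemma mul_centerM_of_sum_eq_zero {M : Matrix (Fin N) (Fin N) ℝ} (h : ∀ i, ∑ j, M i j = 0) :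
    M * centerM N = M := by
  ext i j
  simp [centerM, Matrix.mul_sub, mul_avgM_apply, h]

lemma centerM_mul_of_sum_eq_zero {M : Matrix (Fin N) (Fin N) ℝ} (h : ∀ j, ∑ i, M i j = 0) :
    centerM N * M = M := by
  ext i j
  simp [centerM, Matrix.sub_mul, avgM_mul_apply, h]

lemma sum_centerM_mul_apply (M : Matrix (Fin N) (Fin N) ℝ) (j : Fin N) :
    ∑ i, (centerM N * M) i j = 0 := by
  have hN : (N : ℝ) ≠ 0 := Nat.cast_ne_zero.mpr (Fin.pos j).ne'
  simp [centerM, Matrix.sub_mul, avgM_mul_apply, sum_sub_distrib, hN]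

lemma vecMulVec_one_mul_centerM (a : Fin N → ℝ) : vecMulVec a 1 * centerM N = 0 := by
  ext i j
  have hN : (N : ℝ) ≠ 0 := Nat.cast_ne_zero.mpr (Fin.pos i).ne'
  simp [centerM, Matrix.mul_sub, mul_avgM_apply, hN]

lemma centerM_mul_one_vecMulVec (a : Fin N → ℝ) : centerM N * vecMulVec 1 a = 0 := by
  ext i j
  have hN : (N : ℝ) ≠ 0 := Nat.cast_ne_zero.mpr (Fin.pos i).ne'
  simp [centerM, Matrix.sub_mul, avgM_mul_apply, hN]

end Centering

section GramDist

variable {n : Type*}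

/-- For a Gram matrix `G = X Xᵀ` this is the matrix of squared distances `‖x_i - x_j‖²`. -/
def gramDist (G : Matrix n n ℝ) : Matrix n n ℝ := of fun i j => G i i + G j j - 2 * G i j

lemma gramDist_apply_self (G : Matrix n n ℝ) (i : n) : gramDist G i i = 0 := by
  simp only [gramDist, of_apply]
  ring

lemma gramDist_isSymm {G : Matrix n n ℝ} (hG : G.IsSymm) : (gramDist G).IsSymm :=
  IsSymm.ext fun i j => by simp only [gramDist, of_apply, hG.apply i j, add_comm]

lemma gramDist_nonpos [Fintype n] [DecidableEq n] {G : Matrix n n ℝ} (hG : (-G).PosSemidef)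
    (i j : n) : gramDist G i j ≤ 0 := by
  have hsymm := (isHermitian_iff_isSymm.mp hG.isHermitian).apply i j
  set x : n → ℝ := Pi.single i 1 - Pi.single j 1
  have hquad : star x ⬝ᵥ (-G *ᵥ x) = -(G i i - G i j - G j i + G j j) := by
    simp only [x, star_trivial, mulVec_sub, mulVec_single, MulOpposite.op_one, one_smul,
      dotProduct_sub, sub_dotProduct, single_dotProduct, col_apply, Matrix.neg_apply]
    ring
  have := hG.dotProduct_mulVec_nonneg x
  simp only [Matrix.neg_apply, neg_inj] at hsymm
  rw [gramDist, of_apply]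
  linarith

lemma sum_sq_add_sub_of_sum_eq_zero [Fintype n] (a : n → ℝ) {G : Matrix n n ℝ}
    (hrow : ∀ i, ∑ j, G i j = 0) (hcol : ∀ j, ∑ i, G i j = 0) :
    ∑ i, ∑ j, (a i + a j - G i j) ^ 2 = ∑ i, ∑ j, (a i + a j) ^ 2 + ∑ i, ∑ j, G i j ^ 2 := by
  have hcross : ∑ i, ∑ j, (a i + a j) * G i j = 0 := by
    simp only [add_mul, sum_add_distrib, ← mul_sum, hrow, mul_zero, zero_add]
    rw [sum_comm]
    exact sum_eq_zero fun j _ => by rw [← mul_sum, hcol, mul_zero]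
  have hexp (i j : n) : (a i + a j - G i j) ^ 2 =
      (a i + a j) ^ 2 + G i j ^ 2 - 2 * ((a i + a j) * G i j) := by ring
  simp only [hexp, sum_sub_distrib, sum_add_distrib, ← mul_sum, hcross, mul_zero, sub_zero]

end GramDist

section EDM

variable {N : ℕ}

lemma frobSq_nonneg (M : Matrix (Fin N) (Fin N) ℝ) : 0 ≤ frobSq M :=
  sum_nonneg fun _ _ => sum_nonneg fun _ _ => sq_nonneg _

lemma sInf_frobSq_sub_le_of_isEDM (D : Matrix (Fin N) (Fin N) ℝ) {E : Matrix (Fin N) (Fin N) ℝ}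
    (hE : IsEDM E) :
    sInf {s : ℝ | ∃ D' : Matrix (Fin N) (Fin N) ℝ, IsEDM D' ∧ s = frobSq (D - D')} ≤
      frobSq (D - E) :=
  csInf_le ⟨0, by rintro _ ⟨D', -, rfl⟩; exact frobSq_nonneg _⟩ ⟨E, hE, rfl⟩

lemma centerM_mul_gramDist_mul_centerM {G : Matrix (Fin N) (Fin N) ℝ}
    (hrow : ∀ i, ∑ j, G i j = 0) (hcol : ∀ j, ∑ i, G i j = 0) :
    centerM N * gramDist G * centerM N = (-2 : ℝ) • G := by
  have hsplit : gramDist G = vecMulVec G.diag 1 + vecMulVec 1 G.diag - (2 : ℝ) • G := by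
    ext i j
    simp [gramDist]
  rw [hsplit, Matrix.mul_sub, Matrix.mul_add, Matrix.sub_mul, Matrix.add_mul, Matrix.mul_assoc,
    vecMulVec_one_mul_centerM, centerM_mul_one_vecMulVec, Matrix.mul_smul, Matrix.smul_mul,
    centerM_mul_of_sum_eq_zero hcol, mul_centerM_of_sum_eq_zero hrow]
  simp

lemma frobSq_half_smul_gramDist {G : Matrix (Fin N) (Fin N) ℝ}
    (hrow : ∀ i, ∑ j, G i j = 0) (hcol : ∀ j, ∑ i, G i j = 0) :
    frobSq ((1 / 2 : ℝ) • gramDist G) =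
      ∑ i, ∑ j, (1 / 2 * G i i + 1 / 2 * G j j) ^ 2 + ∑ i, ∑ j, G i j ^ 2 := by
  rw [← sum_sq_add_sub_of_sum_eq_zero (fun i => 1 / 2 * G i i) hrow hcol]
  refine sum_congr rfl fun i _ => sum_congr rfl fun j _ => ?_
  simp only [Matrix.smul_apply, gramDist, of_apply, smul_eq_mul]
  ring

lemma isEDM_sub_half_smul_gramDist {D G : Matrix (Fin N) (Fin N) ℝ} (hD : D.IsSymm)
    (hhollow : ∀ i, D i i = 0) (hnn : ∀ i j, 0 ≤ D i j) (hG : (-G).PosSemidef)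
    (hrow : ∀ i, ∑ j, G i j = 0) (hcol : ∀ j, ∑ i, G i j = 0)
    (hpsd : (-(centerM N * D * centerM N) - G).PosSemidef) :
    IsEDM (D - (1 / 2 : ℝ) • gramDist G) := by
  have hGsymm : G.IsSymm := by simpa using isHermitian_iff_isSymm.mp hG.isHermitian
  refine ⟨hD.sub ((gramDist_isSymm hGsymm).smul _), fun i => ?_, fun i j => ?_, ?_⟩
  · simp [hhollow, gramDist_apply_self]
  · have := gramDist_nonpos hG i j
    simp only [Matrix.sub_apply, Matrix.smul_apply, smul_eq_mul]
    linarith [hnn i j]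
  · rw [Matrix.mul_sub, Matrix.sub_mul, Matrix.mul_smul, Matrix.smul_mul,
      centerM_mul_gramDist_mul_centerM hrow hcol]
    convert hpsd using 1
    module

end EDM

/-- Upper bound on the optimal stress: with `Δg_i = (1/2) Σ_{λ_j<0} λ_j v_{i,j}²`,
    `L* = inf_{D' EDM} ‖D − D'‖_F² ≤ Σ_{i,j} (Δg_i + Δg_j)² + Σ_{λ_i<0} λ_i²`. -/
theorem optimal_stress_upper_bound {N : ℕ} (D : Matrix (Fin N) (Fin N) ℝ)
    (hD : D.IsSymm) (hhollow : ∀ i, D i i = 0) (hnn : ∀ i j, 0 ≤ D i j)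
    (hF : (-(centerM N * D * centerM N)).IsHermitian) :
    sInf {s : ℝ | ∃ D' : Matrix (Fin N) (Fin N) ℝ, IsEDM D' ∧ s = frobSq (D - D')} ≤
      (∑ i, ∑ j,
        ((1 / 2) * ∑ k ∈ Finset.univ.filter (fun k => hF.eigenvalues k < 0),
            hF.eigenvalues k * (hF.eigenvectorBasis k i) ^ 2 +
         (1 / 2) * ∑ k ∈ Finset.univ.filter (fun k => hF.eigenvalues k < 0),
            hF.eigenvalues k * (hF.eigenvectorBasis k j) ^ 2) ^ 2) +
      ∑ i ∈ Finset.univ.filter (fun i => hF.eigenvalues i < 0),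
        (hF.eigenvalues i) ^ 2 := by
  set negEig := univ.filter fun k => hF.eigenvalues k < 0
  set S := hF.spectralPart negEig
  have hcolF (j : Fin N) : ∑ i, (-(centerM N * D * centerM N)) i j = 0 := by
    simp only [Matrix.neg_apply, sum_neg_distrib, Matrix.mul_assoc, sum_centerM_mul_apply, neg_zero]
  have hrow : ∀ i, ∑ j, S i j = 0 :=
    hF.sum_spectralPart_apply_eq_zero hcolF fun k hk => (mem_filter.mp hk).2.ne
  have hcol (j : Fin N) : ∑ i, S i j = 0 := by
    rw [← hrow j]
    exact sum_congr rfl fun i _ => (hF.spectralPart_isSymm negEig).apply j i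
  have hEDM : IsEDM (D - (1 / 2 : ℝ) • gramDist S) := by
    refine isEDM_sub_half_smul_gramDist hD hhollow hnn
      (hF.posSemidef_neg_spectralPart fun k hk => (mem_filter.mp hk).2.le) hrow hcol ?_
    rw [← hF.spectralPart_add_spectralPart_compl negEig, add_sub_cancel_left]
    exact hF.posSemidef_spectralPart fun k hk => by simpa [negEig] using hk
  refine (sInf_frobSq_sub_le_of_isEDM D hEDM).trans_eq ?_
  rw [sub_sub_cancel, frobSq_half_smul_gramDist hrow hcol, hF.sum_sq_spectralPart_apply]
  simp only [S, hF.spectralPart_apply_self]
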